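/- arXiv:2302.11862 — 2 statements merged into one kernel-verified Lean document; each statement's English description precedes it below -/
import Mathlib

section
/- There exists a constant c > 0 such that for every m ∈ ℕ there is an interval graph G on some number n ≥ m of vertices with sd(G) ≥ c·n^{1/4}. -/
open Classical in
/-- `v` is a function of the set `U` of vertices in the graph `G`. -/
def SimpleGraph.IsFunctionOf {V : Type*} (G : SimpleGraph V) (v : V)
    (U : Finset V) : Prop :=
  v ∉ U ∧ ∃ f : (U → Bool) → Bool, ∀ w : V, w ∉ U → w ≠ v →
    (G.Adj v w ↔ f (fun u => decide (G.Adj w u.1)) = true)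

/-- The functionality of a vertex: least size of a set of which it is a function. -/
noncomputable def SimpleGraph.vertexFun {V : Type*} (G : SimpleGraph V) (v : V) : ℕ :=
  sInf {k | ∃ U : Finset V, U.card = k ∧ G.IsFunctionOf v U}

/-- The functionality of a graph. -/
noncomputable def SimpleGraph.graphFun {V : Type*} (G : SimpleGraph V) : ℕ :=
  sSup {m | ∃ W : Set V, W.Nonempty ∧
    m = sInf {k | ∃ v : W, k = (G.induce W).vertexFun v}}

/-- The symmetric difference of a pair of distinct vertices. -/
noncomputable def SimpleGraph.sdPair {V : Type*} (G : SimpleGraph V) (u v : V) : ℕ :=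
  {w | w ≠ u ∧ w ≠ v ∧ ((G.Adj w u ∧ ¬ G.Adj w v) ∨ (¬ G.Adj w u ∧ G.Adj w v))}.ncard

/-- The symmetric difference of a graph. -/
noncomputable def SimpleGraph.sdGraph {V : Type*} (G : SimpleGraph V) : ℕ :=
  sSup {m | ∃ W : Set V, (∃ u v : W, u ≠ v) ∧
    m = sInf {k | ∃ u v : W, u ≠ v ∧ k = (G.induce W).sdPair u v}}


/-- The arc of the circle `AddCircle c` obtained as the image of the closed
interval `[x, x + l]` under the quotient map `ℝ → ℝ/cℤ`. -/
def circleArc (c x l : ℝ) : Set (AddCircle c) :=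
  (fun t : ℝ => (t : AddCircle c)) '' Set.Icc x (x + l)

/-- `G` is a circular arc graph: the intersection graph of arcs of a circle. -/
def IsCircularArcGraph {V : Type*} (G : SimpleGraph V) : Prop :=
  ∃ c : ℝ, 0 < c ∧ ∃ a l : V → ℝ, (∀ v, 0 ≤ l v ∧ l v < c) ∧
    ∀ u v : V, u ≠ v →
      (G.Adj u v ↔ (circleArc c (a u) (l u) ∩ circleArc c (a v) (l v)).Nonempty)

/-- `G` is an interval graph: the intersection graph of closed intervals of `ℝ`. -/
def IsIntervalGraph {V : Type*} (G : SimpleGraph V) : Prop :=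
  ∃ a b : V → ℝ, (∀ v, a v ≤ b v) ∧
    ∀ u v : V, u ≠ v →
      (G.Adj u v ↔ (Set.Icc (a u) (b u) ∩ Set.Icc (a v) (b v)).Nonempty)

namespace SdConstr

def NN (t : ℕ) : ℕ := 2 * t
def MM (t : ℕ) : ℕ := 6 * t * t + 1

def Vt (t : ℕ) : Type := Σ ℓ : Fin (t + 1), Fin (MM t - ℓ.1 * NN t)

instance (t : ℕ) : DecidableEq (Vt t) := by unfold Vt; infer_instance
instance (t : ℕ) : Fintype (Vt t) := by unfold Vt; infer_instance

def A {t : ℕ} (x : Vt t) : ℕ := x.2.1 + 1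
def B {t : ℕ} (x : Vt t) : ℕ := x.2.1 + 1 + x.1.1 * NN t

lemma lN_le {t : ℕ} (x : Vt t) : x.1.1 * NN t ≤ t * NN t :=
  Nat.mul_le_mul_right _ (Nat.lt_succ_iff.mp x.1.2)

lemma one_le_A {t : ℕ} (x : Vt t) : 1 ≤ A x := Nat.le_add_left _ _

lemma A_le_B {t : ℕ} (x : Vt t) : A x ≤ B x := Nat.le_add_right _ _

lemma B_eq {t : ℕ} (x : Vt t) : B x = A x + x.1.1 * NN t := rfl

lemma tN_lt_M (t : ℕ) : t * NN t < MM t := by unfold NN MM; nlinarith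

lemma B_le_M {t : ℕ} (x : Vt t) : B x ≤ MM t := by
  have h1 := x.2.2
  have h2 := lN_le x
  have h3 := tN_lt_M t
  unfold A B at *
  omega

def mkV' (t ℓ c : ℕ) : Vt t :=
  ⟨⟨min ℓ t, by omega⟩, ⟨min (c - 1) (MM t - min ℓ t * NN t - 1), by
    simp only [Fin.val_mk]
    have h2 : min ℓ t * NN t ≤ t * NN t := Nat.mul_le_mul_right _ (min_le_right _ _)
    have h3 := tN_lt_M t
    omega⟩⟩

lemma ell_mkV' (t ℓ c : ℕ) (h1 : ℓ ≤ t) : (mkV' t ℓ c).1.1 = ℓ := by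
  unfold mkV'; simp [h1]

lemma A_mkV' (t ℓ c : ℕ) (h1 : ℓ ≤ t) (h2 : 1 ≤ c) (h3 : c + ℓ * NN t ≤ MM t) :
    A (mkV' t ℓ c) = c := by
  have h4 : ℓ * NN t ≤ MM t := by omega
  unfold A mkV'
  simp only [Fin.val_mk, min_eq_left h1]
  omega

lemma B_mkV' (t ℓ c : ℕ) (h1 : ℓ ≤ t) (h2 : 1 ≤ c) (h3 : c + ℓ * NN t ≤ MM t) :
    B (mkV' t ℓ c) = c + ℓ * NN t := by
  have h4 : ℓ * NN t ≤ MM t := by omega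
  unfold B mkV'
  simp only [Fin.val_mk, min_eq_left h1]
  omega

lemma vert_ext {t : ℕ} (ht : 1 ≤ t) {x y : Vt t} (hA : A x = A y) (hB : B x = B y) :
    x = y := by
  have hN : 0 < NN t := by unfold NN; omega
  have hl : x.1.1 * NN t = y.1.1 * NN t := by
    have := B_eq x; have := B_eq y; omega
  have hl2 : x.1 = y.1 := Fin.ext (Nat.eq_of_mul_eq_mul_right hN hl)
  cases x with
  | mk x1 x2 =>
    cases y with
    | mk y1 y2 =>
      simp only at hl2
      subst hl2
      have : x2 = y2 := by
        apply Fin.ext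
        unfold A at hA
        simp only at hA
        omega
      rw [this]

def Meets {t : ℕ} (x y : Vt t) : Prop := A x ≤ B y ∧ A y ≤ B x

lemma ell_gap {t : ℕ} {x y : Vt t} (h : x.1.1 * NN t < y.1.1 * NN t) :
    x.1.1 * NN t + NN t ≤ y.1.1 * NN t := by
  have hxy : x.1.1 < y.1.1 := by
    by_contra hc
    push_neg at hc
    exact absurd (Nat.mul_le_mul_right (NN t) hc) (by omega)
  calc x.1.1 * NN t + NN t = (x.1.1 + 1) * NN t := by ring
  _ ≤ y.1.1 * NN t := Nat.mul_le_mul_right _ hxy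

/-- A run of `t` point vertices inside `u`'s interval and outside `v`'s interval. -/
lemma points_work {t : ℕ} (ht : 1 ≤ t) (u v : Vt t) (x0 : ℕ) (h1 : 1 ≤ x0)
    (h2 : x0 + t ≤ MM t + 1)
    (hin : ∀ r, r < t → A u ≤ x0 + r ∧ x0 + r ≤ B u)
    (hout : ∀ r, r < t → x0 + r < A v ∨ B v < x0 + r) :
    ∃ f : Fin t → Vt t, Function.Injective f ∧ ∀ r, (Meets (f r) u ↔ ¬ Meets (f r) v) := by
  have hval : ∀ r : Fin t, (x0 + r.1) + 0 * NN t ≤ MM t := by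
    intro r
    have := r.2
    simp only [Nat.zero_mul, Nat.add_zero]
    omega
  have hA : ∀ r : Fin t, A (mkV' t 0 (x0 + r.1)) = x0 + r.1 := fun r =>
    A_mkV' t 0 _ (Nat.zero_le t) (by omega) (hval r)
  have hB : ∀ r : Fin t, B (mkV' t 0 (x0 + r.1)) = x0 + r.1 := by
    intro r
    have := B_mkV' t 0 (x0 + r.1) (Nat.zero_le t) (by omega) (hval r)
    simpa using this
  refine ⟨fun r => mkV' t 0 (x0 + r.1), ?_, ?_⟩
  · intro r1 r2 h
    have e := congrArg A h
    simp only [hA] at e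
    exact Fin.ext (by omega)
  · intro r
    obtain ⟨hin1, hin2⟩ := hin r.1 r.2
    have hout' := hout r.1 r.2
    have hABu := A_le_B u
    have hABv := A_le_B v
    unfold Meets
    rw [hA, hB]
    omega

/-- The staircase case: one distinguisher of each length `s`. -/
lemma stair {t : ℕ} (ht : 1 ≤ t) (u v : Vt t) (hlt : A u < A v) (hbb : B u < B v)
    (s : ℕ) (hs1 : 1 ≤ s) (hst : s ≤ t) :
    ∃ w : Vt t, w.1.1 = s ∧ (Meets w u ↔ ¬ Meets w v) := by
  obtain ⟨K, S, LU, LV, hMK, hNK, hSN, hS1, hSK, hLU, hLUK, hLV, hLVK⟩ :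
      ∃ K S LU LV, MM t = 3 * K + 1 ∧ NN t ≤ K ∧ s * NN t = S ∧ NN t ≤ S ∧ S ≤ K ∧
        u.1.1 * NN t = LU ∧ LU ≤ K ∧ v.1.1 * NN t = LV ∧ LV ≤ K :=
    ⟨t * NN t, s * NN t, u.1.1 * NN t, v.1.1 * NN t, by unfold MM NN; ring,
      Nat.le_mul_of_pos_left _ ht, rfl, Nat.le_mul_of_pos_left _ hs1,
      Nat.mul_le_mul_right _ hst, rfl, lN_le u, rfl, lN_le v⟩
  have hBu : B u = A u + LU := hLU ▸ B_eq u
  have hBv : B v = A v + LV := hLV ▸ B_eq v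
  have hAu1 := one_le_A u
  have hAv1 := one_le_A v
  have hBMu := B_le_M u
  have hBMv := B_le_M v
  by_cases h1 : max (B u + 1) (A v) + S ≤ MM t
  · refine ⟨mkV' t s (max (B u + 1) (A v)), ell_mkV' _ _ _ hst, ?_⟩
    have hA := A_mkV' t s (max (B u + 1) (A v)) hst (by omega) (by rw [hSN]; omega)
    have hB := B_mkV' t s (max (B u + 1) (A v)) hst (by omega) (by rw [hSN]; omega)
    rw [hSN] at hB
    unfold Meets
    rw [hA, hB]
    omega
  · by_cases h2 : A v ≤ B u + 1
    · refine ⟨mkV' t s (A v - 1 - S), ell_mkV' _ _ _ hst, ?_⟩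
      have hc1 : 1 ≤ A v - 1 - S := by omega
      have hA := A_mkV' t s (A v - 1 - S) hst hc1 (by rw [hSN]; omega)
      have hB := B_mkV' t s (A v - 1 - S) hst hc1 (by rw [hSN]; omega)
      rw [hSN] at hB
      unfold Meets
      rw [hA, hB]
      omega
    · by_cases h3 : B u + S < A v
      · refine ⟨mkV' t s (A v - S), ell_mkV' _ _ _ hst, ?_⟩
        have hc1 : 1 ≤ A v - S := by omega
        have hA := A_mkV' t s (A v - S) hst hc1 (by rw [hSN]; omega)
        have hB := B_mkV' t s (A v - S) hst hc1 (by rw [hSN]; omega)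
        rw [hSN] at hB
        unfold Meets
        rw [hA, hB]
        omega
      · refine ⟨mkV' t s (B u - S), ell_mkV' _ _ _ hst, ?_⟩
        have hc1 : 1 ≤ B u - S := by omega
        have hA := A_mkV' t s (B u - S) hst hc1 (by rw [hSN]; omega)
        have hB := B_mkV' t s (B u - S) hst hc1 (by rw [hSN]; omega)
        rw [hSN] at hB
        unfold Meets
        rw [hA, hB]
        omega

lemma key_oriented {t : ℕ} (ht : 1 ≤ t) (u v : Vt t)
    (hor : A u < A v ∨ (A u = A v ∧ B u < B v)) :
    ∃ f : Fin t → Vt t, Function.Injective f ∧ ∀ r, (Meets (f r) u ↔ ¬ Meets (f r) v) := by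
  obtain ⟨K, LU, LV, hMK, hNK, hLU, hLUK, hLV, hLVK, hNt⟩ :
      ∃ K LU LV, MM t = 3 * K + 1 ∧ NN t ≤ K ∧ u.1.1 * NN t = LU ∧ LU ≤ K ∧
        v.1.1 * NN t = LV ∧ LV ≤ K ∧ NN t = 2 * t :=
    ⟨t * NN t, u.1.1 * NN t, v.1.1 * NN t, by unfold MM NN; ring,
      Nat.le_mul_of_pos_left _ ht, rfl, lN_le u, rfl, lN_le v, rfl⟩
  have hBu : B u = A u + LU := hLU ▸ B_eq u
  have hBv : B v = A v + LV := hLV ▸ B_eq v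
  have hAu1 := one_le_A u
  have hAv1 := one_le_A v
  have hBMu := B_le_M u
  have hBMv := B_le_M v
  rcases hor with hlt | ⟨heq, hbb⟩
  · rcases lt_trichotomy (B u) (B v) with hbb | hbb | hbb
    · -- staircase case
      have hstair := fun r : Fin t =>
        stair ht u v hlt hbb (r.1 + 1) (by omega) (by have := r.2; omega)
      refine ⟨fun r => (hstair r).choose, ?_, fun r => (hstair r).choose_spec.2⟩
      intro r1 r2 h
      have h' : (hstair r1).choose = (hstair r2).choose := h
      have e1 := (hstair r1).choose_spec.1
      have e2 := (hstair r2).choose_spec.1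
      rw [h'] at e1
      exact Fin.ext (by omega)
    · -- B u = B v, A u < A v : points [A u, A u + t)
      have hgap : LV + NN t ≤ LU := by
        have h := ell_gap (x := v) (y := u) (by rw [hLU, hLV]; omega)
        rw [hLU, hLV] at h
        omega
      apply points_work ht u v (A u) (by omega) (by omega)
      · intro r hr
        omega
      · intro r hr
        omega
    · -- B v < B u, A u < A v : nesting
      have hgap : LV + NN t ≤ LU := by
        have h := ell_gap (x := v) (y := u) (by rw [hLU, hLV]; omega)
        rw [hLU, hLV] at h
        omega
      by_cases hsp : A u + t ≤ A v
      · apply points_work ht u v (A u) (by omega) (by omega)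
        · intro r hr
          omega
        · intro r hr
          omega
      · apply points_work ht u v (B u + 1 - t) (by omega) (by omega)
        · intro r hr
          omega
        · intro r hr
          omega
  · -- A u = A v, B u < B v : points (B u, B u + t]
    have hgap : LU + NN t ≤ LV := by
      have h := ell_gap (x := u) (y := v) (by rw [hLU, hLV]; omega)
      rw [hLU, hLV] at h
      omega
    obtain ⟨f, hinj, hf⟩ :=
      points_work ht v u (B u + 1) (by omega) (by omega)
        (by intro r hr; omega) (by intro r hr; omega)
    exact ⟨f, hinj, fun r => by have := hf r; tauto⟩

/-- Every pair of distinct vertices has `t` interval-distinguishers. -/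
lemma key {t : ℕ} (ht : 1 ≤ t) (u v : Vt t) (huv : u ≠ v) :
    ∃ f : Fin t → Vt t, Function.Injective f ∧ ∀ r, (Meets (f r) u ↔ ¬ Meets (f r) v) := by
  rcases lt_trichotomy (A u) (A v) with h | h | h
  · exact key_oriented ht u v (Or.inl h)
  · rcases lt_trichotomy (B u) (B v) with h2 | h2 | h2
    · exact key_oriented ht u v (Or.inr ⟨h, h2⟩)
    · exact absurd (vert_ext ht h h2) huv
    · obtain ⟨f, hinj, hf⟩ := key_oriented ht v u (Or.inr ⟨h.symm, h2⟩)
      exact ⟨f, hinj, fun r => by have := hf r; tauto⟩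
  · obtain ⟨f, hinj, hf⟩ := key_oriented ht v u (Or.inl h)
    exact ⟨f, hinj, fun r => by have := hf r; tauto⟩

lemma Meets_comm {t : ℕ} (x y : Vt t) : Meets x y ↔ Meets y x := And.comm

noncomputable def eV (t : ℕ) : Vt t ≃ Fin (Fintype.card (Vt t)) := Fintype.equivFin _

/-- The interval graph, as a graph on `Fin n`. -/
noncomputable def Gr (t : ℕ) : SimpleGraph (Fin (Fintype.card (Vt t))) :=
  SimpleGraph.fromRel (fun i j => Meets ((eV t).symm i) ((eV t).symm j))

lemma Gr_adj {t : ℕ} (i j : Fin (Fintype.card (Vt t))) :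
    (Gr t).Adj i j ↔ i ≠ j ∧ Meets ((eV t).symm i) ((eV t).symm j) := by
  rw [Gr, SimpleGraph.fromRel_adj]
  have := Meets_comm ((eV t).symm i) ((eV t).symm j)
  tauto

lemma Gr_isIntervalGraph (t : ℕ) : IsIntervalGraph (Gr t) := by
  refine ⟨fun i => (A ((eV t).symm i) : ℝ), fun i => (B ((eV t).symm i) : ℝ),
    fun i => by beta_reduce; exact_mod_cast A_le_B _, fun i j hij => ?_⟩
  rw [Gr_adj, Set.Icc_inter_Icc, Set.nonempty_Icc, max_le_iff, le_min_iff, le_min_iff]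
  beta_reduce
  have h1 := A_le_B ((eV t).symm i)
  have h2 := A_le_B ((eV t).symm j)
  unfold Meets
  constructor
  · rintro ⟨-, hm1, hm2⟩
    refine ⟨⟨by exact_mod_cast h1, by exact_mod_cast hm1⟩,
      by exact_mod_cast hm2, by exact_mod_cast h2⟩
  · rintro ⟨⟨-, hm1⟩, hm2, -⟩
    exact ⟨hij, by exact_mod_cast hm1, by exact_mod_cast hm2⟩

lemma card_lower (t : ℕ) : MM t ≤ Fintype.card (Vt t) := by
  have : Function.Injective (fun i : Fin (MM t) =>
      (⟨⟨0, Nat.succ_pos t⟩, ⟨i.1, by simp⟩⟩ : Vt t)) := by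
    intro i j h
    have := congrArg (fun x : Vt t => x.2.1) h
    exact Fin.ext this
  have h := Fintype.card_le_of_injective _ this
  rwa [Fintype.card_fin] at h

lemma card_upper (t : ℕ) (ht : 1 ≤ t) : Fintype.card (Vt t) ≤ (t + 1) * MM t := by
  have : Function.Injective (fun x : Vt t =>
      ((x.1, ⟨A x - 1, by have := B_le_M x; have := one_le_A x; have := A_le_B x; omega⟩) :
        Fin (t + 1) × Fin (MM t))) := by
    intro x y h
    obtain ⟨h1, h2⟩ := Prod.mk.injEq .. ▸ h
    have hA : A x = A y := by
      have h3 : A x - 1 = A y - 1 := congrArg Fin.val h2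
      have := one_le_A x
      have := one_le_A y
      omega
    have hB : B x = B y := by
      rw [B_eq, B_eq, hA, congrArg Fin.val h1]
    exact vert_ext ht hA hB
  have h := Fintype.card_le_of_injective _ this
  rwa [Fintype.card_prod, Fintype.card_fin, Fintype.card_fin] at h

lemma sdPair_univ_ge {t : ℕ} (ht : 1 ≤ t)
    (u v : ↥(Set.univ : Set (Fin (Fintype.card (Vt t))))) (huv : u ≠ v) :
    t - 2 ≤ ((Gr t).induce Set.univ).sdPair u v := by
  classical
  have hUV : (eV t).symm u.1 ≠ (eV t).symm v.1 := by
    intro h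
    exact huv (Subtype.ext ((eV t).symm.injective h))
  obtain ⟨f, hinj, hf⟩ := key ht ((eV t).symm u.1) ((eV t).symm v.1) hUV
  set g : Fin t → ↥(Set.univ : Set (Fin (Fintype.card (Vt t)))) :=
    fun r => ⟨(eV t) (f r), Set.mem_univ _⟩ with hgdef
  have hginj : Function.Injective g := by
    intro r1 r2 h
    apply hinj
    apply (eV t).injective
    exact congrArg Subtype.val h
  set G := (Gr t).induce (Set.univ : Set (Fin (Fintype.card (Vt t)))) with hGdef
  set S := {w | w ≠ u ∧ w ≠ v ∧
    ((G.Adj w u ∧ ¬ G.Adj w v) ∨ (¬ G.Adj w u ∧ G.Adj w v))} with hSdef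
  have hadj : ∀ (r : Fin t) (x : ↥(Set.univ : Set (Fin (Fintype.card (Vt t))))),
      g r ≠ x → (G.Adj (g r) x ↔ Meets (f r) ((eV t).symm x.1)) := by
    intro r x hx
    have h0 : G.Adj (g r) x ↔ (Gr t).Adj (g r).1 x.1 := by
      rw [hGdef]
      simp [SimpleGraph.comap_adj]
    rw [h0, Gr_adj]
    have h1 : (eV t).symm (g r).1 = f r := (eV t).symm_apply_apply _
    rw [h1]
    constructor
    · exact fun h => h.2
    · intro h
      refine ⟨fun hh => hx (Subtype.ext hh), h⟩
  have hsub : Set.range g \ ({u, v} : Set _) ⊆ S := by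
    rintro w ⟨⟨r, rfl⟩, hw⟩
    simp only [Set.mem_insert_iff, Set.mem_singleton_iff, not_or] at hw
    obtain ⟨hwu, hwv⟩ := hw
    refine ⟨hwu, hwv, ?_⟩
    have h1 := hadj r u hwu
    have h2 := hadj r v hwv
    have h3 := hf r
    tauto
  have hr : (Set.range g).ncard = t := by
    rw [← Set.image_univ, Set.ncard_image_of_injective _ hginj, Set.ncard_univ,
      Nat.card_eq_fintype_card, Fintype.card_fin]
  have hsplit : (Set.range g).ncard ≤ (Set.range g \ ({u, v} : Set _)).ncard +
      ({u, v} : Set _).ncard :=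
    le_trans (Set.ncard_le_ncard (Set.subset_diff_union _ _) (Set.toFinite _))
      (Set.ncard_union_le _ _)
  have hpair : ({u, v} : Set _).ncard ≤ 2 :=
    le_trans (Set.ncard_insert_le _ _) (by simp [Set.ncard_singleton])
  have hfinal : (Set.range g \ ({u, v} : Set _)).ncard ≤ S.ncard :=
    Set.ncard_le_ncard hsub (Set.toFinite _)
  rw [SimpleGraph.sdPair, ← hSdef]
  omega

lemma two_le_M (t : ℕ) (ht : 1 ≤ t) : 2 ≤ MM t := by unfold MM; nlinarith

lemma sdGraph_ge {t : ℕ} (ht : 1 ≤ t) : t - 2 ≤ (Gr t).sdGraph := by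
  classical
  have h0N : ∀ c : ℕ, 1 ≤ c → c ≤ MM t → c + 0 * NN t ≤ MM t := by intro c h1 h2; omega
  have hM := two_le_M t ht
  have hA1 : A (mkV' t 0 1) = 1 := A_mkV' t 0 1 (Nat.zero_le t) le_rfl (h0N 1 le_rfl (by omega))
  have hA2 : A (mkV' t 0 2) = 2 := A_mkV' t 0 2 (Nat.zero_le t) (by omega) (h0N 2 (by omega) hM)
  set i0 := eV t (mkV' t 0 1)
  set j0 := eV t (mkV' t 0 2)
  have hij : i0 ≠ j0 := by
    intro h
    have h' := (eV t).injective h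
    have h12 : (1 : ℕ) = 2 := by rw [← hA1, ← hA2, h']
    omega
  set W : Set (Fin (Fintype.card (Vt t))) := Set.univ with hW
  set u0 : ↥W := ⟨i0, Set.mem_univ _⟩
  set v0 : ↥W := ⟨j0, Set.mem_univ _⟩
  have hne : u0 ≠ v0 := fun h => hij (congrArg Subtype.val h)
  set Kset := {k | ∃ u v : ↥W, u ≠ v ∧ k = ((Gr t).induce W).sdPair u v} with hKset
  have hKne : Kset.Nonempty := ⟨_, u0, v0, hne, rfl⟩
  have hlow : t - 2 ≤ sInf Kset := by
    apply le_csInf hKne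
    rintro k ⟨u, v, huv, rfl⟩
    exact sdPair_univ_ge ht u v huv
  have hbdd : BddAbove {m | ∃ W' : Set (Fin (Fintype.card (Vt t))), (∃ u v : ↥W', u ≠ v) ∧
      m = sInf {k | ∃ u v : ↥W', u ≠ v ∧ k = ((Gr t).induce W').sdPair u v}} := by
    refine ⟨Fintype.card (Vt t), ?_⟩
    rintro m ⟨W', ⟨u, v, huv⟩, rfl⟩
    have hk : ((Gr t).induce W').sdPair u v ∈
        {k | ∃ u v : ↥W', u ≠ v ∧ k = ((Gr t).induce W').sdPair u v} := ⟨u, v, huv, rfl⟩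
    refine le_trans (Nat.sInf_le hk) ?_
    rw [SimpleGraph.sdPair]
    calc {w | w ≠ u ∧ w ≠ v ∧ (((Gr t).induce W').Adj w u ∧ ¬((Gr t).induce W').Adj w v ∨
            ¬((Gr t).induce W').Adj w u ∧ ((Gr t).induce W').Adj w v)}.ncard
        ≤ (Set.univ : Set ↥W').ncard :=
          Set.ncard_le_ncard (Set.subset_univ _) Set.finite_univ
      _ = Nat.card ↥W' := Set.ncard_univ _
      _ = W'.ncard := (Nat.card_coe_set_eq W').symm ▸ rfl
      _ ≤ (Set.univ : Set (Fin (Fintype.card (Vt t)))).ncard :=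
          Set.ncard_le_ncard (Set.subset_univ _) Set.finite_univ
      _ = Fintype.card (Vt t) := by
          rw [Set.ncard_univ, Nat.card_eq_fintype_card, Fintype.card_fin]
  have hmem : sInf Kset ∈ {m | ∃ W' : Set (Fin (Fintype.card (Vt t))), (∃ u v : ↥W', u ≠ v) ∧
      m = sInf {k | ∃ u v : ↥W', u ≠ v ∧ k = ((Gr t).induce W').sdPair u v}} :=
    ⟨W, ⟨u0, v0, hne⟩, rfl⟩
  exact le_trans hlow (le_csSup hbdd hmem)

end SdConstr

/-- there are interval graphs on arbitrarily many vertices `n` with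
symmetric difference at least `c·n^{1/4}`, for a universal constant `c > 0`. -/
theorem sd_intervalGraph_lower_bound :
    ∃ c : ℝ, 0 < c ∧ ∀ m : ℕ, ∃ n : ℕ, m ≤ n ∧ ∃ G : SimpleGraph (Fin n),
      IsIntervalGraph G ∧ c * (n : ℝ) ^ (1 / 4 : ℝ) ≤ (G.sdGraph : ℝ) := by
  refine ⟨1/6, by norm_num, fun m => ?_⟩
  set t := m + 3 with hts
  have ht : 1 ≤ t := by omega
  refine ⟨Fintype.card (SdConstr.Vt t), ?_, SdConstr.Gr t, SdConstr.Gr_isIntervalGraph t, ?_⟩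
  · have h := SdConstr.card_lower t
    have h2 : m ≤ SdConstr.MM t := by unfold SdConstr.MM; nlinarith
    omega
  · have hsd : t - 2 ≤ (SdConstr.Gr t).sdGraph := SdConstr.sdGraph_ge ht
    have hn : Fintype.card (SdConstr.Vt t) ≤ (t + 1) * SdConstr.MM t := SdConstr.card_upper t ht
    have ht3 : (3 : ℝ) ≤ (t : ℝ) := by exact_mod_cast (by omega : 3 ≤ t)
    have h16 : ((Fintype.card (SdConstr.Vt t)) : ℝ) ≤ (2 * (t : ℝ)) ^ (4 : ℕ) := by
      have h1 : ((Fintype.card (SdConstr.Vt t)) : ℝ) ≤ ((t : ℝ) + 1) * (6 * t * t + 1) := by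
        unfold SdConstr.MM at hn
        exact_mod_cast hn
      nlinarith [ht3, h1]
    have hq : ((Fintype.card (SdConstr.Vt t)) : ℝ) ^ (1/4 : ℝ) ≤ 2 * (t : ℝ) := by
      have hnn : (0 : ℝ) ≤ ((Fintype.card (SdConstr.Vt t)) : ℝ) := Nat.cast_nonneg _
      have h2t : (0 : ℝ) ≤ 2 * (t : ℝ) := by linarith
      have h2 : ((Fintype.card (SdConstr.Vt t)) : ℝ) ^ (1/4 : ℝ) ≤
          ((2 * (t : ℝ)) ^ (4 : ℕ)) ^ (1/4 : ℝ) :=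
        Real.rpow_le_rpow hnn h16 (by norm_num)
      refine le_trans h2 (le_of_eq ?_)
      rw [← Real.rpow_natCast (2 * (t : ℝ)) 4, ← Real.rpow_mul h2t]
      norm_num
    have hc2 : ((t - 2 : ℕ) : ℝ) = (t : ℝ) - 2 := by
      have : 2 ≤ t := by omega
      push_cast [Nat.cast_sub this]
      ring
    calc (1/6 : ℝ) * ((Fintype.card (SdConstr.Vt t)) : ℝ) ^ (1/4 : ℝ)
        ≤ (1/6 : ℝ) * (2 * (t : ℝ)) := by
          apply mul_le_mul_of_nonneg_left hq (by norm_num)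
      _ ≤ (t : ℝ) - 2 := by linarith
      _ = ((t - 2 : ℕ) : ℝ) := hc2.symm
      _ ≤ (((SdConstr.Gr t).sdGraph : ℕ) : ℝ) := Nat.cast_le.mpr hsd
end

section
/- There exists D such that for every integer d ≥ D the following holds in the circular-arc construction with n = d²: every integral arc s of the circle of length at least d − 1 contains at least d/5 integer points that are starting points of arcs in R, and also at least d/5 integer points that are ending points of arcs in R. -/
/-- `x` modulo `m`, for real numbers. -/
noncomputable def rmod (x m : ℝ) : ℝ := x - m * ⌊x / m⌋

/-- The circumference `n = d²` of the circle of the construction. -/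
def circum (d : ℕ) : ℝ := (d : ℝ) ^ 2

/-- The real representative `i·d + j` of the integer point `(i,j)_d`. -/
def ipt (d i j : ℕ) : ℝ := (i : ℝ) * d + j

/-- The arc `[a,b]` of the circle of circumference `m`, where `a, b` are the images of
the reals `x, y`: the image of the interval `[x, x + ((y − x) mod m)]`. -/
noncomputable def arcCC (m x y : ℝ) : Set (AddCircle m) :=
  (fun t : ℝ => (t : AddCircle m)) '' Set.Icc x (x + rmod (y - x) m)

/-- The length of the arc `[a,b]`, namely `(y − x) mod m`. -/
noncomputable def arcLen (m x y : ℝ) : ℝ := rmod (y - x) m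

/-- Indices `(i,j)`, `0 ≤ i,j < d`, `i ≠ j`, of the arcs `[(i,j)_d, (j,i)_d]` of the
construction having length at most `n/4`. -/
noncomputable def RIdx (d : ℕ) : Set (ℕ × ℕ) :=
  {q | q.1 < d ∧ q.2 < d ∧ q.1 ≠ q.2 ∧
    arcLen (circum d) (ipt d q.1 q.2) (ipt d q.2 q.1) ≤ circum d / 4}

/-- The arc `[(i,j)_d, (j,i)_d]` indexed by `q = (i,j)`. -/
noncomputable def arcR (d : ℕ) (q : ℕ × ℕ) : Set (AddCircle (circum d)) :=
  arcCC (circum d) (ipt d q.1 q.2) (ipt d q.2 q.1)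

/-- The set of starting points of arcs in `R`. -/
noncomputable def startPts (d : ℕ) : Set (AddCircle (circum d)) :=
  {p | ∃ q ∈ RIdx d, p = ((ipt d q.1 q.2 : ℝ) : AddCircle (circum d))}

/-- The set of ending points of arcs in `R`. -/
noncomputable def endPts (d : ℕ) : Set (AddCircle (circum d)) :=
  {p | ∃ q ∈ RIdx d, p = ((ipt d q.2 q.1 : ℝ) : AddCircle (circum d))}

/-- The intersection graph `G_R` of the arcs of the construction. -/
noncomputable def GR (d : ℕ) : SimpleGraph (RIdx d) where
  Adj q q' := q ≠ q' ∧ (arcR d q ∩ arcR d q').Nonempty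
  symm := ⟨by
    rintro q q' ⟨h1, h2⟩
    exact ⟨h1.symm, by rwa [Set.inter_comm]⟩⟩
  loopless := ⟨fun q h => h.1 rfl⟩

/-!
Write an integer point as `w = (i,j)_d = i·d + j`. As `d ≡ -1 [ZMOD d + 1]`, `w ≡ j - i`, and the
arc `[(i,j)_d, (j,i)_d]` has length `(j - i)(d - 1) mod d²`, which is at most `s(d - 1) + 1` for
`s = (j - i) mod (d + 1)`. Hence `w` is a starting point of an arc in `R` as soon as its residue
modulo `d + 1` lies in `[2, d/4]`, and an ending point as soon as it lies in `[d + 1 - d/4, d - 1]`.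
An integral arc of length at least `d - 1` contains `d` consecutive integer points, whose residues
modulo `d + 1` miss only one class (up to a shift by one where the arc crosses `0`, since
`d² ≡ 1`), so it meets each of the two windows in at least `d/4 - 3 ≥ d/5` points.
-/

open Finset

lemma rmod_intCast (a b : ℤ) (hb : 0 < b) : rmod a b = ((a % b : ℤ) : ℝ) := by
  have hb' : (0 : ℝ) < b := by exact_mod_cast hb
  have hfloor : ⌊(a : ℝ) / b⌋ = a / b := by
    rw [Int.floor_eq_iff, le_div_iff₀ hb', div_lt_iff₀ hb']
    have hdecomp : (a : ℝ) = b * ((a / b : ℤ) : ℝ) + ((a % b : ℤ) : ℝ) := by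
      exact_mod_cast (Int.mul_ediv_add_emod a b).symm
    have hnonneg : (0 : ℝ) ≤ ((a % b : ℤ) : ℝ) := by exact_mod_cast Int.emod_nonneg a hb.ne'
    have hlt : ((a % b : ℤ) : ℝ) < b := by exact_mod_cast Int.emod_lt_of_pos a hb
    constructor <;> nlinarith
  rw [rmod, hfloor, Int.emod_def]
  push_cast
  ring

lemma Int.emod_eq_of_neg_lt_of_lt {z m : ℤ} (h₁ : -m < z) (h₂ : z < m) :
    0 ≤ z ∧ z % m = z ∨ z < 0 ∧ z % m = z + m := by
  rcases le_or_gt 0 z with hz | hz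
  · exact Or.inl ⟨hz, Int.emod_eq_of_lt hz h₂⟩
  · refine Or.inr ⟨hz, ?_⟩
    rw [← Int.add_mul_emod_self_left z m 1, mul_one]
    exact Int.emod_eq_of_lt (by omega) (by omega)

/-- `d² ≡ 1 [ZMOD d + 1]`, so subtracting `d²` lowers the residue modulo `d + 1` by one. -/
lemma Int.emod_sq_emod_add_one_mem_Icc {d v : ℤ} (hd : 0 < d) (hv₀ : 0 ≤ v) (hv : v < 2 * d ^ 2)
    (hres : v % (d + 1) ≠ 0) :
    v % d ^ 2 % (d + 1) ∈ Set.Icc (v % (d + 1) - 1) (v % (d + 1)) := by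
  rcases lt_or_ge v (d ^ 2) with hlt | hge
  · rw [Int.emod_eq_of_lt hv₀ hlt]
    exact ⟨by omega, le_rfl⟩
  · have hwrap : v % d ^ 2 = (v % (d + 1) - 1) + (d + 1) * (v / (d + 1) - (d - 1)) := by
      rw [← Int.add_mul_emod_self_left v (d ^ 2) (-1),
        Int.emod_eq_of_lt (by nlinarith) (by nlinarith)]
      linear_combination (Int.mul_ediv_add_emod v (d + 1)).symm
    have hpos : 0 ≤ v % (d + 1) - 1 := by
      have := Int.emod_nonneg v (show d + 1 ≠ 0 by omega)
      omega
    rw [hwrap, Int.add_mul_emod_self_left,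
      Int.emod_eq_of_lt hpos (by linarith [Int.emod_lt_of_pos v (show 0 < d + 1 by omega)])]
    exact ⟨le_rfl, by omega⟩

lemma Int.sub_le_card_filter_emod_mem_Icc (m c : ℤ) {lo hi : ℤ} (hlo : 0 ≤ lo) (hhi : hi ≤ m) :
    hi - lo ≤ #{t ∈ Ico 0 m | (c + t) % (m + 1) ∈ Icc lo hi} := by
  rcases lt_or_ge hi lo with hempty | hle
  · omega
  have hm : 0 < m + 1 := by omega
  -- every residue except that of `c + m` is attained by some `t ∈ [0, m)`
  have hsurj : (Icc lo hi).erase ((c + m) % (m + 1)) ⊆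
      image (fun t ↦ (c + t) % (m + 1)) {t ∈ Ico 0 m | (c + t) % (m + 1) ∈ Icc lo hi} := by
    intro r hr
    obtain ⟨hne, hr⟩ := mem_erase.1 hr
    have hr' := mem_Icc.1 hr
    have hinv : (c + (r - c) % (m + 1)) % (m + 1) = r := by
      rw [Int.add_emod, Int.emod_emod_of_dvd _ dvd_rfl, ← Int.add_emod, add_sub_cancel,
        Int.emod_eq_of_lt (by omega) (by omega)]
    have hne' : (r - c) % (m + 1) ≠ m := fun h ↦ hne (by rw [← hinv, h])
    refine mem_image.2 ⟨(r - c) % (m + 1), mem_filter.2 ⟨mem_Ico.2 ⟨Int.emod_nonneg _ hm.ne', ?_⟩,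
      by rw [hinv]; exact hr⟩, hinv⟩
    have := Int.emod_lt_of_pos (r - c) hm
    omega
  have hIcc : (#(Icc lo hi) : ℤ) = hi + 1 - lo := Int.card_Icc_of_le _ _ (by omega)
  have := (pred_card_le_card_erase (s := Icc lo hi) (a := (c + m) % (m + 1))).trans
    ((card_le_card hsurj).trans card_image_le)
  omega

section IntegerPoints

variable {p : ℝ} {N : ℤ}

lemma intCast_emod_addCircle (hpN : p = N) (a : ℤ) :
    (((a % N : ℤ) : ℝ) : AddCircle p) = ((a : ℝ) : AddCircle p) := by
  rw [Int.emod_def, Int.cast_sub, AddCircle.coe_sub, sub_eq_self, AddCircle.coe_eq_zero_iff]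
  exact ⟨a / N, by rw [hpN, zsmul_eq_mul]; push_cast; ring⟩

lemma intCast_add_mem_arcCC (hpN : p = N) (hN : 0 < N) {x y t : ℤ} (ht₀ : 0 ≤ t)
    (ht : t ≤ (y - x) % N) : (((x + t : ℤ) : ℝ) : AddCircle p) ∈ arcCC p x y := by
  refine ⟨(x + t : ℤ), ⟨?_, ?_⟩, rfl⟩
  · exact_mod_cast (le_add_of_nonneg_right ht₀)
  · rw [hpN, ← Int.cast_sub, rmod_intCast _ _ hN]
    exact_mod_cast (by linarith : x + t ≤ x + (y - x) % N)

lemma card_le_ncard_inter_arcCC (hpN : p = N) (hN : 0 < N) {P : Set (AddCircle p)}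
    (hP : P.Finite) {x y : ℤ} (T : Finset ℤ) (hT : ∀ t ∈ T, 0 ≤ t ∧ t ≤ (y - x) % N)
    (hTP : ∀ t ∈ T, (((x + t : ℤ) : ℝ) : AddCircle p) ∈ P) :
    #T ≤ (P ∩ arcCC p x y).ncard := by
  have : Fact (0 < p) := ⟨by rw [hpN]; exact_mod_cast hN⟩
  rw [← Set.ncard_coe_finset]
  refine Set.ncard_le_ncard_of_injOn (fun t : ℤ ↦ (((x + t : ℤ) : ℝ) : AddCircle p))
    (fun t ht ↦ ⟨hTP t ht, intCast_add_mem_arcCC hpN hN (hT t ht).1 (hT t ht).2⟩) ?_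
    (hP.inter_of_left _)
  intro t ht t' ht' h
  have hlt : ∀ s ∈ T, ((x + s : ℤ) : ℝ) ∈ Set.Ico (x : ℝ) (x + p) := fun s hs ↦ by
    have := Int.emod_lt_of_pos (y - x) hN
    constructor
    · exact_mod_cast (by linarith [(hT s hs).1] : x ≤ x + s)
    · rw [hpN]; exact_mod_cast (by linarith [(hT s hs).2] : x + s < x + N)
  exact_mod_cast (add_right_injective x) <|
    Int.cast_injective ((AddCircle.coe_eq_coe_iff_of_mem_Ico (hlt t ht) (hlt t' ht')).1 h)

end IntegerPoints

lemma circum_eq (d : ℕ) : circum d = (((d : ℤ) ^ 2 : ℤ) : ℝ) := by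
  push_cast [circum]; rfl

lemma ipt_eq (d i j : ℕ) : ipt d i j = (((i : ℤ) * d + j : ℤ) : ℝ) := by
  push_cast [ipt]; rfl

lemma arcLen_ipt (d i j : ℕ) (hd : 0 < d) :
    arcLen (circum d) (ipt d i j) (ipt d j i) =
      (((j - i : ℤ) * (d - 1) % (d : ℤ) ^ 2 : ℤ) : ℝ) := by
  rw [arcLen, ipt_eq, ipt_eq, circum_eq, ← Int.cast_sub, rmod_intCast _ _ (by positivity)]
  congr 2
  ring

lemma sub_mul_pred_emod_sq_le {d i j : ℤ} (hd : 0 < d) (hi₀ : 0 ≤ i) (hi : i < d) (hj₀ : 0 ≤ j)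
    (hj : j < d) (hs : 4 * ((j - i) % (d + 1)) ≤ d) :
    (j - i) * (d - 1) % d ^ 2 ≤ (j - i) % (d + 1) * (d - 1) + 1 := by
  set s := (j - i) % (d + 1) with hs_def
  have hs₀ : 0 ≤ s := Int.emod_nonneg _ (by omega)
  rcases Int.emod_eq_of_neg_lt_of_lt (m := d + 1) (z := j - i) (by omega) (by omega)
    with ⟨-, h⟩ | ⟨-, h⟩ <;> rw [← hs_def] at h
  · rw [← h, Int.emod_eq_of_lt (by nlinarith) (by nlinarith)]
    omega
  · rw [show (j - i) * (d - 1) = (s * (d - 1) + 1) + d ^ 2 * (-1) by rw [h]; ring,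
      Int.add_mul_emod_self_left, Int.emod_eq_of_lt (by nlinarith) (by nlinarith)]

lemma mem_RIdx_of_emod {d i j : ℕ} (hd : 4 ≤ d) (hi : i < d) (hj : j < d)
    (h₂ : 2 ≤ ((j : ℤ) - i) % (d + 1)) (h₄ : 4 * (((j : ℤ) - i) % (d + 1)) ≤ d) :
    (i, j) ∈ RIdx d := by
  refine ⟨hi, hj, fun hij ↦ by simp only at hij; subst hij; simp at h₂, ?_⟩
  have hlen := sub_mul_pred_emod_sq_le (d := d) (i := i) (j := j) (by omega) (by omega)
    (by omega) (by omega) (by omega) h₄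
  have hquarter : (j - i : ℤ) * (d - 1) % (d : ℤ) ^ 2 * 4 ≤ (d : ℤ) ^ 2 := by nlinarith
  rw [arcLen_ipt d i j (by omega), circum_eq, le_div_iff₀ (by norm_num)]
  exact_mod_cast hquarter

lemma exists_ipt_eq_intCast {d : ℕ} (hd : 0 < d) {w : ℤ} (hw₀ : 0 ≤ w) (hw : w < (d : ℤ) ^ 2) :
    ∃ i j : ℕ, i < d ∧ j < d ∧ ((ipt d i j : ℝ) : AddCircle (circum d)) = (w : ℝ) ∧
      w % (d + 1) = ((j : ℤ) - i) % (d + 1) := by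
  lift w to ℕ using hw₀
  obtain ⟨i, j, hi, hj, rfl⟩ : ∃ i j, i < d ∧ j < d ∧ w = i * d + j :=
    ⟨w / d, w % d, Nat.div_lt_of_lt_mul (by rw [← sq]; exact_mod_cast hw), Nat.mod_lt w hd,
      (Nat.div_add_mod' w d).symm⟩
  refine ⟨i, j, hi, hj, by push_cast [ipt]; rfl, ?_⟩
  rw [show ((i * d + j : ℕ) : ℤ) = (j - i) + (d + 1) * i by push_cast; ring,
    Int.add_mul_emod_self_left]

lemma intCast_mem_startPts {d : ℕ} (hd : 4 ≤ d) {w : ℤ} (hw₀ : 0 ≤ w) (hw : w < (d : ℤ) ^ 2)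
    (h₂ : 2 ≤ w % (d + 1)) (h₄ : 4 * (w % (d + 1)) ≤ d) :
    ((w : ℝ) : AddCircle (circum d)) ∈ startPts d := by
  obtain ⟨i, j, hi, hj, hw, hres⟩ := exists_ipt_eq_intCast (by omega) hw₀ hw
  rw [hres] at h₂ h₄
  exact ⟨(i, j), mem_RIdx_of_emod hd hi hj h₂ h₄, hw.symm⟩

lemma intCast_mem_endPts {d : ℕ} (hd : 4 ≤ d) {w : ℤ} (hw₀ : 0 ≤ w) (hw : w < (d : ℤ) ^ 2)
    (h₁ : w % (d + 1) ≤ d - 1) (h₄ : 4 * (d + 1 - w % (d + 1)) ≤ d) :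
    ((w : ℝ) : AddCircle (circum d)) ∈ endPts d := by
  obtain ⟨i, j, hi, hj, hw, hres⟩ := exists_ipt_eq_intCast (by omega) hw₀ hw
  rw [hres] at h₁ h₄
  have hswap : ((i : ℤ) - j) % (d + 1) = d + 1 - ((j : ℤ) - i) % (d + 1) := by
    rcases Int.emod_eq_of_neg_lt_of_lt (m := (d : ℤ) + 1) (z := (j : ℤ) - i)
      (by omega) (by omega) with ⟨hg₀, hg⟩ | ⟨hg₀, hg⟩ <;>
    rcases Int.emod_eq_of_neg_lt_of_lt (m := (d : ℤ) + 1) (z := (i : ℤ) - j)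
      (by omega) (by omega) with ⟨hf₀, hf⟩ | ⟨hf₀, hf⟩ <;>
    rw [hg] at h₄ ⊢ <;> rw [hf] <;> omega
  have h₂' : 2 ≤ ((i : ℤ) - j) % (d + 1) := by rw [hswap]; omega
  have h₄' : 4 * (((i : ℤ) - j) % (d + 1)) ≤ d := by rw [hswap]; omega
  exact ⟨(j, i), mem_RIdx_of_emod hd hj hi h₂' h₄', hw.symm⟩

lemma RIdx_finite (d : ℕ) : (RIdx d).Finite :=
  ((Set.finite_Iio d).prod (Set.finite_Iio d)).subset fun _ hq ↦ ⟨hq.1, hq.2.1⟩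

lemma startPts_finite (d : ℕ) : (startPts d).Finite :=
  ((RIdx_finite d).image _).subset fun _ ⟨q, hq, hp⟩ ↦ ⟨q, hq, hp.symm⟩

lemma endPts_finite (d : ℕ) : (endPts d).Finite :=
  ((RIdx_finite d).image _).subset fun _ ⟨q, hq, hp⟩ ↦ ⟨q, hq, hp.symm⟩

lemma sub_sub_one_le_ncard_inter_arcCC {d : ℕ} (hd : 0 < d) {P : Set (AddCircle (circum d))}
    (hP : P.Finite) {lo hi : ℤ} (hlo : 0 ≤ lo) (hhi : hi ≤ d)
    (hPw : ∀ w : ℤ, 0 ≤ w → w < (d : ℤ) ^ 2 → lo ≤ w % (d + 1) → w % (d + 1) ≤ hi →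
      ((w : ℝ) : AddCircle (circum d)) ∈ P)
    {x y : ℤ} (hxy : (d : ℤ) - 1 ≤ (y - x) % (d : ℤ) ^ 2) :
    hi - lo - 1 ≤ (P ∩ arcCC (circum d) x y).ncard := by
  have hN : (0 : ℤ) < (d : ℤ) ^ 2 := by positivity
  set c := x % (d : ℤ) ^ 2 with hc
  have hc₀ : 0 ≤ c := Int.emod_nonneg x hN.ne'
  have hc₁ : c < (d : ℤ) ^ 2 := Int.emod_lt_of_pos x hN
  set T := {t ∈ Ico 0 (d : ℤ) | (c + t) % (d + 1) ∈ Icc (lo + 1) hi}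
  have hcard : hi - (lo + 1) ≤ #T := Int.sub_le_card_filter_emod_mem_Icc d c (by omega) hhi
  suffices #T ≤ (P ∩ arcCC (circum d) x y).ncard by omega
  refine card_le_ncard_inter_arcCC (circum_eq d) hN hP T (fun t ht ↦ ?_) (fun t ht ↦ ?_)
  · have := (mem_Ico.1 (mem_filter.1 ht).1)
    omega
  · obtain ⟨ht, hres⟩ := mem_filter.1 ht
    obtain ⟨ht₀, htd⟩ := mem_Ico.1 ht
    obtain ⟨hres₁, hres₂⟩ := mem_Icc.1 hres
    obtain ⟨hwrap₁, hwrap₂⟩ := Int.emod_sq_emod_add_one_mem_Icc (d := d) (v := c + t)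
      (by omega) (by omega) (by nlinarith) (by omega)
    rw [← intCast_emod_addCircle (circum_eq d), ← Int.emod_add_emod, ← hc]
    exact hPw _ (Int.emod_nonneg _ hN.ne') (Int.emod_lt_of_pos _ hN) (by omega) (by omega)

/-- for all large enough `d`, every integral arc of the circle of
circumference `d²` of length at least `d − 1` contains at least `d/5` integer points
that are starting points of arcs in `R`, and at least `d/5` integer points that are
ending points of arcs in `R`. -/
theorem arcs_starting_ending_points :
    ∃ D : ℕ, ∀ d : ℕ, D ≤ d → ∀ x y : ℤ,
      (d : ℝ) - 1 ≤ arcLen (circum d) (x : ℝ) (y : ℝ) →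
      (d : ℝ) / 5 ≤ ((startPts d ∩ arcCC (circum d) (x : ℝ) (y : ℝ)).ncard : ℝ) ∧
      (d : ℝ) / 5 ≤ ((endPts d ∩ arcCC (circum d) (x : ℝ) (y : ℝ)).ncard : ℝ) := by
  refine ⟨80, fun d hd x y hlen => ?_⟩
  have hxy : (d : ℤ) - 1 ≤ (y - x) % (d : ℤ) ^ 2 := by
    rw [arcLen, circum_eq, ← Int.cast_sub, rmod_intCast _ _ (by positivity)] at hlen
    exact_mod_cast hlen
  have hstart := sub_sub_one_le_ncard_inter_arcCC (by omega) (startPts_finite d) (lo := 2)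
    (hi := d / 4) (by norm_num) (by omega)
    (fun w hw₀ hw h₂ h₄ ↦ intCast_mem_startPts (by omega) hw₀ hw h₂ (by omega)) hxy
  have hend := sub_sub_one_le_ncard_inter_arcCC (by omega) (endPts_finite d)
    (lo := d + 1 - d / 4) (hi := d - 1) (by omega) (by omega)
    (fun w hw₀ hw h₁ h₂ ↦ intCast_mem_endPts (by omega) hw₀ hw h₂ (by omega)) hxy
  constructor <;> rw [div_le_iff₀ (by norm_num)] <;> norm_cast <;> omega
end
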